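/- Let k ≥ 2 be an integer, n ≥ 1 an integer, and let s: ℝ → ℝ be a smooth, π/k-periodic function with s''(θ) + s(θ) > 0 for all θ. Then |∫₀^{2π} s(θ)·cos(2nkθ) dθ| ≤ (1/(4n²k² − 1))·∫₀^{2π} s(θ) dθ. (Equivalently, the Fourier cosine coefficients s_n of s satisfy |s_n| ≤ 2s₀/(4n²k² − 1), where s₀ is the mean of s.) -/

import Mathlib

/-!
Integrating by parts twice against `cos (m θ)` over a full period turns `∫ 𝔯 cos (m θ)` into
`(1 - m²) ∫ s cos (m θ)`, and the case `m = 0` gives `∫ 𝔯 = ∫ s`. Since `𝔯 > 0` and `|cos| ≤ 1`,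
`(m² - 1) |∫ s cos (m θ)| = |∫ 𝔯 cos (m θ)| ≤ ∫ 𝔯 = ∫ s`; the `π/k`-periodicity of `s` makes
`m = 2nk` an admissible frequency for the period `2π`.
-/

open Real Set Filter MeasureTheory

noncomputable section

/-- Radius of curvature of the curve with support function `f`: `𝔯[f] = f'' + f`. -/
def rad (f : ℝ → ℝ) (θ : ℝ) : ℝ := iteratedDeriv 2 f θ + f θ

lemma rad_eq (f : ℝ → ℝ) : rad f = fun θ => deriv (deriv f) θ + f θ := by
  ext θ
  rw [rad, iteratedDeriv_succ, iteratedDeriv_one]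

lemma Function.Periodic.deriv {f : ℝ → ℝ} {c : ℝ} (h : Function.Periodic f c) :
    Function.Periodic (deriv f) c := fun x => by
  rw [← deriv_comp_add_const, funext h]

lemma integral_deriv_deriv_mul_cos_of_periodic {f : ℝ → ℝ} (hf : ContDiff ℝ 2 f)
    (hper : Function.Periodic f (2 * π)) (m : ℤ) :
    ∫ θ in (0:ℝ)..(2 * π), deriv (deriv f) θ * cos (m * θ) =
      -(m : ℝ) ^ 2 * ∫ θ in (0:ℝ)..(2 * π), f θ * cos (m * θ) := by
  obtain ⟨hf₁, -, hf'⟩ := (contDiff_succ_iff_deriv (n := 1)).mp hf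
  obtain ⟨hf₂, -, hf''⟩ := (contDiff_succ_iff_deriv (n := 0)).mp hf'
  have hf₀ := hf.continuous
  have hanti : ∀ θ, HasDerivAt (fun θ => deriv f θ * cos (m * θ) + m * f θ * sin (m * θ))
      ((deriv (deriv f) θ + m ^ 2 * f θ) * cos (m * θ)) θ := by
    intro θ
    have hcos : HasDerivAt (fun θ => cos (m * θ)) (-sin (m * θ) * m) θ := by
      simpa using ((hasDerivAt_id θ).const_mul (m : ℝ)).cos
    have hsin : HasDerivAt (fun θ => sin (m * θ)) (cos (m * θ) * m) θ := by
      simpa using ((hasDerivAt_id θ).const_mul (m : ℝ)).sin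
    exact (((hf₂ θ).hasDerivAt.mul hcos).add
      (((hf₁ θ).hasDerivAt.const_mul (m : ℝ)).mul hsin)).congr_deriv (by ring)
  have hsum : ∫ θ in (0:ℝ)..(2 * π), (deriv (deriv f) θ + m ^ 2 * f θ) * cos (m * θ) = 0 := by
    rw [intervalIntegral.integral_eq_sub_of_hasDerivAt (fun θ _ => hanti θ)
      (Continuous.intervalIntegrable (by fun_prop) _ _)]
    simp [cos_periodic.int_mul_eq, sin_periodic.int_mul_eq, hper.eq, hper.deriv.eq]
  have hsplit : ∫ θ in (0:ℝ)..(2 * π), (deriv (deriv f) θ + m ^ 2 * f θ) * cos (m * θ) =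
      (∫ θ in (0:ℝ)..(2 * π), deriv (deriv f) θ * cos (m * θ)) +
        (m : ℝ) ^ 2 * ∫ θ in (0:ℝ)..(2 * π), f θ * cos (m * θ) := by
    simp only [add_mul, mul_assoc]
    rw [intervalIntegral.integral_add (Continuous.intervalIntegrable (by fun_prop) _ _)
      (Continuous.intervalIntegrable (by fun_prop) _ _), intervalIntegral.integral_const_mul]
  linarith

lemma integral_rad_mul_cos_of_periodic {f : ℝ → ℝ} (hf : ContDiff ℝ 2 f)
    (hper : Function.Periodic f (2 * π)) (m : ℤ) :
    ∫ θ in (0:ℝ)..(2 * π), rad f θ * cos (m * θ) =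
      (1 - (m : ℝ) ^ 2) * ∫ θ in (0:ℝ)..(2 * π), f θ * cos (m * θ) := by
  have hf₀ := hf.continuous
  have hf'' : Continuous (deriv (deriv f)) := by
    obtain ⟨-, -, hf'⟩ := (contDiff_succ_iff_deriv (n := 1)).mp hf
    exact ((contDiff_succ_iff_deriv (n := 0)).mp hf').2.2.continuous
  simp only [rad_eq, add_mul]
  rw [intervalIntegral.integral_add (Continuous.intervalIntegrable (by fun_prop) _ _)
    (Continuous.intervalIntegrable (by fun_prop) _ _),
    integral_deriv_deriv_mul_cos_of_periodic hf hper]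
  ring

lemma integral_rad_of_periodic {f : ℝ → ℝ} (hf : ContDiff ℝ 2 f)
    (hper : Function.Periodic f (2 * π)) :
    ∫ θ in (0:ℝ)..(2 * π), rad f θ = ∫ θ in (0:ℝ)..(2 * π), f θ := by
  simpa using integral_rad_mul_cos_of_periodic hf hper 0

lemma abs_integral_mul_cos_le_integral {g : ℝ → ℝ} {a b : ℝ} (hab : a ≤ b)
    (hg : IntervalIntegrable g volume a b) (hg₀ : ∀ x ∈ Icc a b, 0 ≤ g x) (c : ℝ) :
    |∫ x in a..b, g x * cos (c * x)| ≤ ∫ x in a..b, g x := by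
  calc |∫ x in a..b, g x * cos (c * x)|
      ≤ ∫ x in a..b, |g x * cos (c * x)| := intervalIntegral.abs_integral_le_integral_abs hab
    _ ≤ ∫ x in a..b, g x := by
      refine intervalIntegral.integral_mono_on hab
        (hg.mul_continuousOn (by fun_prop)).abs hg fun x hx => ?_
      rw [abs_mul, abs_of_nonneg (hg₀ x hx)]
      exact mul_le_of_le_one_right (hg₀ x hx) (abs_cos_le_one _)

/-- Let `k ≥ 2`, `n ≥ 1`, and let `s` be a smooth, `π/k`-periodic
function with `s'' + s > 0`. Then its Fourier cosine coefficients satisfy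
`|∫₀^{2π} s(θ) cos(2nkθ) dθ| ≤ (1/(4n²k² - 1)) ∫₀^{2π} s(θ) dθ`. -/
theorem fourier_coefficient_bound
    (k : ℕ) (hk : 2 ≤ k) (n : ℕ) (hn : 1 ≤ n)
    (s : ℝ → ℝ) (hsmooth : ContDiff ℝ (⊤ : ℕ∞) s)
    (hper : Function.Periodic s (π / k))
    (hconv : ∀ θ, 0 < rad s θ) :
    |∫ θ in (0:ℝ)..(2 * π), s θ * Real.cos (2 * n * k * θ)| ≤
      (1 / (4 * (n:ℝ)^2 * (k:ℝ)^2 - 1)) * ∫ θ in (0:ℝ)..(2 * π), s θ := by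
  have hs : ContDiff ℝ 2 s := hsmooth.of_le (by norm_cast)
  have hper₂ : Function.Periodic s (2 * π) := by
    have hk₀ : (k : ℝ) ≠ 0 := by positivity
    have h2π : ((2 * k : ℕ) : ℝ) * (π / k) = 2 * π := by
      push_cast
      field_simp
    simpa only [h2π] using hper.nat_mul (2 * k)
  have hm : ((2 * n * k : ℤ) : ℝ) = 2 * n * k := by push_cast; rfl
  have hM : 1 < (2 * n * k : ℝ) ^ 2 := by
    have : (2 : ℝ) ≤ 2 * n * k := by norm_cast; nlinarith
    nlinarith
  have hrad_cont : Continuous (rad s) := (hs.continuous_iteratedDeriv 2 le_rfl).add hs.continuous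
  have hrad := abs_integral_mul_cos_le_integral two_pi_pos.le (hrad_cont.intervalIntegrable _ _)
    (fun θ _ => (hconv θ).le) ((2 * n * k : ℤ) : ℝ)
  rw [integral_rad_mul_cos_of_periodic hs hper₂, integral_rad_of_periodic hs hper₂, abs_mul,
    hm, abs_of_neg (by linarith)] at hrad
  rw [one_div_mul_eq_div, le_div_iff₀ (by linarith)]
  linarith

end
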